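/- arXiv:0903.2494 — 4 statements merged into one kernel-verified Lean document; each statement's English description precedes it below -/
import Mathlib

section
/- Let X be a β-set and let (y,x) be a hook of X, and set X' = (X ∖ {x}) ∪ {y}. Then θ(X') = θ(X). Consequently, if a β-set X'' is obtained from X by removing any finite sequence of hooks in this way, then θ(X'') = θ(X). -/
/-- A partition of a natural number, given as a weakly decreasing,
eventually-zero sequence of parts (0-indexed: `parts i` is the (i+1)-st part). -/
structure NPartition where
  parts : ℕ → ℕ
  antitone : ∀ ⦃i j : ℕ⦄, i ≤ j → parts j ≤ parts i
  finite_support : ∃ N : ℕ, ∀ n : ℕ, N ≤ n → parts n = 0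

/-- The conjugate (dual) partition: `conj j` is the (j+1)-st part of `λ*`,
i.e. the number of indices `i` with `parts i > j`. -/
noncomputable def NPartition.conj (μ : NPartition) (j : ℕ) : ℕ :=
  Nat.card {i : ℕ // j < μ.parts i}

/-- A partition is symmetric if it equals its conjugate. -/
def IsSymmetric (μ : NPartition) : Prop := ∀ j : ℕ, μ.conj j = μ.parts j

/-- `X` is a β-set for `μ`: if `X = {x_1 < … < x_k}` then the parts of `μ`
are `λ_i = x_{k+1−i} − (k − i)` (discarding zero parts); equivalently the
elements of `X` are exactly `parts i + (card X − 1 − i)` for `i < card X`. -/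
def IsBetaSet (X : Finset ℕ) (μ : NPartition) : Prop :=
  ∀ n : ℕ, n ∈ X ↔ ∃ i : ℕ, i < X.card ∧ n + i + 1 = μ.parts i + X.card

/-- A hook of a β-set `X`: a pair `(y, x)` with `y ∉ X`, `x ∈ X`, `y < x`. -/
def IsBetaHook (X : Finset ℕ) (y x : ℕ) : Prop := y ∉ X ∧ x ∈ X ∧ y < x

/-- `θ(X) = t + 1/2`: the number of beads of `X` strictly to the right of `t`
equals the number of spaces (nonnegative integers not in `X`) at positions `≤ t`. -/
def IsTheta (X : Finset ℕ) (t : ℤ) : Prop :=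
  -1 ≤ t ∧ (X.filter (fun x : ℕ => t < (x : ℤ))).card =
    ((Finset.range (t + 1).toNat).filter (fun y => y ∉ X)).card

/-- Removing one hook `(y, x)` from the β-set `X` yields `X'`. -/
def RemoveHook (X X' : Finset ℕ) : Prop :=
  ∃ y x : ℕ, y ∉ X ∧ x ∈ X ∧ y < x ∧ X' = insert y (X.erase x)

/-- Removing one hook of length `p` from the β-set `X` yields `X'`. -/
def RemovePHook (p : ℕ) (X X' : Finset ℕ) : Prop :=
  ∃ y x : ℕ, y ∉ X ∧ x ∈ X ∧ y + p = x ∧ X' = insert y (X.erase x)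

/-- The partition represented by `X` has empty `p`-core: `X` can be reduced by
successive removals of `p`-hooks to the β-set `{0, 1, …, card X − 1}` of `∅`. -/
def HasEmptyPCore (p : ℕ) (X : Finset ℕ) : Prop :=
  Relation.ReflTransGen (RemovePHook p) X (Finset.range X.card)

/-- The induced β-set on runner `γ`: `X_γ = {j : γ + j·p ∈ X}`. -/
def runner (p γ : ℕ) (X : Finset ℕ) : Finset ℕ :=
  (X.filter (fun x => x % p = γ)).image (fun x => x / p)

/-- The set of arm lengths of the diagonal hooks `h_{ii}` of `μ`. -/
def diagArms (μ : NPartition) : Set ℕ :=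
  {a | ∃ d : ℕ, d < μ.parts d ∧ a + d + 1 = μ.parts d}

/-- The set of leg lengths of the diagonal hooks `h_{ii}` of `μ`. -/
def diagLegs (μ : NPartition) : Set ℕ :=
  {l | ∃ d : ℕ, d < μ.parts d ∧ l + d + 1 = μ.conj d}

/-- `δ(μ)`: the set of hook lengths of the diagonal hooks of `μ`. -/
def diagHookLengths (μ : NPartition) : Set ℕ :=
  {e | ∃ d : ℕ, d < μ.parts d ∧ e + 2 * d + 1 = μ.parts d + μ.conj d}

/-- `(x', x)` is a diagonal hook of the β-set `X`: a hook which corresponds to a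
hook `h_{ii}` on the diagonal of the Young diagram under the standard bijection. -/
def IsDiagHook (X : Finset ℕ) (x' x : ℕ) : Prop :=
  IsBetaHook X x' x ∧
  (X.filter (fun z => x ≤ z)).card =
    ((Finset.range (x' + 1)).filter (fun z => z ∉ X)).card

/-- `μ` is concentrated at `{γ, γ*}` (`γ* = p − 1 − γ`): every diagonal hook of `μ`
has arm length congruent to `γ` or `γ*` modulo `p`. -/
def ConcentratedAt (p γ : ℕ) (μ : NPartition) : Prop :=
  ∀ a ∈ diagArms μ, a % p = γ ∨ a % p = p - 1 - γ

/-- `μ` is a `p`-core: no hook of its Young diagram has length `p`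
(the hook at node `(i,j)`, 0-indexed, has length `parts i + conj j − i − j − 1`). -/
def IsPCore (p : ℕ) (μ : NPartition) : Prop :=
  ∀ i j : ℕ, j < μ.parts i → μ.parts i + μ.conj j ≠ p + i + j + 1

/-- `μ` is `γ`-packed: the set of arm lengths of diagonal hooks of `μ` congruent to
`γ` mod `p` is exactly `{γ + i·p : 0 ≤ i ≤ r}` for some `r ≥ 0`. -/
def GammaPacked (p γ : ℕ) (μ : NPartition) : Prop :=
  ∃ r : ℕ, {a | a ∈ diagArms μ ∧ a % p = γ} = {a : ℕ | ∃ i ≤ r, a = γ + i * p}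

/-- The β-set `X` admits no `p`-hook. -/
def NoPHooks (p : ℕ) (X : Finset ℕ) : Prop := ¬ ∃ X' : Finset ℕ, RemovePHook p X X'

/-- `μ0` is the `p`-core of the partition with β-set `X`: it is represented by a
β-set obtained from `X` by repeatedly removing `p`-hooks until none remain. -/
def IsPCoreOf (p : ℕ) (X : Finset ℕ) (μ0 : NPartition) : Prop :=
  ∃ X0 : Finset ℕ, Relation.ReflTransGen (RemovePHook p) X X0 ∧
    NoPHooks p X0 ∧ IsBetaSet X0 μ0

/-!
Splitting `X` and `[0, n)` along their intersection gives
`#{x ∈ X | n ≤ x} + n = #{y < n | y ∉ X} + #X`, so the beads right of `n - 1/2` and the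
spaces left of it balance exactly when `n = #X`, i.e. `θ(X) = #X - 1/2`. Removing a hook
does not change `#X`.
-/

open Finset

lemma card_filter_le_add_eq (X : Finset ℕ) (n : ℕ) :
    #(X.filter (n ≤ ·)) + n = #((range n).filter (· ∉ X)) + #X := by
  have hX := card_filter_add_card_filter_not (s := X) (· < n)
  have hn := card_filter_add_card_filter_not (s := range n) (· ∈ X)
  have hcommon : (range n).filter (· ∈ X) = X.filter (· < n) := by
    ext; simp only [mem_filter, mem_range]; tauto
  simp only [not_lt, card_range, hcommon] at hX hn
  omega

lemma isTheta_natCast_sub_one_iff (X : Finset ℕ) (n : ℕ) :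
    IsTheta X (n - 1) ↔ n = #X := by
  have hbeads : X.filter (fun x : ℕ => ((n : ℤ) - 1) < x) = X.filter (n ≤ ·) :=
    filter_congr fun _ _ => by omega
  simp only [IsTheta, sub_add_cancel, Int.toNat_natCast, hbeads]
  have := card_filter_le_add_eq X n
  omega

theorem isTheta_iff (X : Finset ℕ) (t : ℤ) : IsTheta X t ↔ t + 1 = #X := by
  constructor
  · intro ht
    obtain ⟨n, rfl⟩ : ∃ n : ℕ, t = n - 1 := ⟨(t + 1).toNat, by have := ht.1; omega⟩
    rw [isTheta_natCast_sub_one_iff] at ht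
    omega
  · intro ht
    obtain rfl : t = #X - 1 := by omega
    exact (isTheta_natCast_sub_one_iff X _).2 rfl

theorem RemoveHook.card_eq {X X' : Finset ℕ} (h : RemoveHook X X') : #X' = #X := by
  obtain ⟨y, x, hy, hx, -, rfl⟩ := h
  rw [card_insert_of_notMem (by simp [hy]), card_erase_add_one hx]

/-- removing a hook from a β-set does not change `θ`; consequently
neither does removing any finite sequence of hooks. -/
theorem stmt2 :
    (∀ (X X' : Finset ℕ) (t : ℤ), RemoveHook X X' → IsTheta X t → IsTheta X' t) ∧
    (∀ (X X'' : Finset ℕ) (t : ℤ), Relation.ReflTransGen RemoveHook X X'' →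
      IsTheta X t → IsTheta X'' t) := by
  have removeHook : ∀ (X X' : Finset ℕ) (t : ℤ), RemoveHook X X' → IsTheta X t →
      IsTheta X' t := by
    intro X X' t h
    rw [isTheta_iff, isTheta_iff, h.card_eq]
    exact id
  refine ⟨removeHook, fun X X'' t h => ?_⟩
  induction h with
  | refl => exact id
  | tail _ hstep ih => exact removeHook _ _ t hstep ∘ ih
end

section
/- Let p be a prime and let λ be a symmetric partition with empty p-core, with β-set X and θ = θ(X). Then for every residue γ with 0 ≤ γ ≤ p − 1, the number of elements x ∈ X with x > θ and x ≡ γ (mod p) equals the number of nonnegative integers y ∉ X with y < θ and y ≡ γ (mod p). -/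
/-!
Since `t ≥ -1`, splitting `X` and `{0, …, t}` at `t` shows that the defining equation of `θ`
forces `t + 1 = #X`. Removing a `p`-hook moves one bead within its residue class modulo `p`,
so the number of beads in each class is an invariant of `p`-hook removal; for a partition with
empty `p`-core it is therefore the same for `X` and for `{0, …, #X - 1}`. Cancelling the beads
below `#X`, which both sets share, leaves exactly the two counts of the theorem.
-/

open Finset

theorem IsTheta.toNat_add_one_eq_card {X : Finset ℕ} {t : ℤ} (h : IsTheta X t) :
    (t + 1).toNat = X.card := by
  obtain ⟨ht, hcount⟩ := h
  have hbeads : X.filter (fun x : ℕ => t < (x : ℤ)) = X \ range (t + 1).toNat := by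
    ext x; grind
  rw [hbeads, filter_notMem_eq_sdiff] at hcount
  simpa using (card_sdiff_eq_card_sdiff_iff.mp hcount).symm

theorem card_filter_insert_erase {α : Type*} [DecidableEq α] (P : α → Prop) [DecidablePred P]
    {s : Finset α} {x y : α} (hy : y ∉ s) (hx : x ∈ s) (hP : P y ↔ P x) :
    ((insert y (s.erase x)).filter P).card = (s.filter P).card := by
  rw [filter_insert, filter_erase]
  by_cases hPx : P x
  · have hxP : x ∈ s.filter P := mem_filter.mpr ⟨hx, hPx⟩
    have hyP : y ∉ (s.filter P).erase x := fun h => hy (mem_filter.mp (mem_of_mem_erase h)).1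
    rw [if_pos (hP.mpr hPx), card_insert_of_notMem hyP, card_erase_add_one hxP]
  · rw [if_neg (hP.not.mpr hPx), erase_eq_of_notMem (fun h => hPx (mem_filter.mp h).2)]

theorem RemovePHook.card_filter_mod_eq {p γ : ℕ} {Y Z : Finset ℕ} (h : RemovePHook p Y Z) :
    (Z.filter (· % p = γ)).card = (Y.filter (· % p = γ)).card := by
  obtain ⟨y, x, hy, hx, rfl, rfl⟩ := h
  exact card_filter_insert_erase _ hy hx (by rw [Nat.add_mod_right])

theorem card_filter_mod_eq_of_reflTransGen_removePHook {p γ : ℕ} {Y Z : Finset ℕ}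
    (h : Relation.ReflTransGen (RemovePHook p) Y Z) :
    (Z.filter (· % p = γ)).card = (Y.filter (· % p = γ)).card := by
  induction h with
  | refl => rfl
  | tail _ hstep ih => rw [hstep.card_filter_mod_eq, ih]

theorem stmt5_general (p : ℕ) (X : Finset ℕ) (t : ℤ)
    (hcore : HasEmptyPCore p X)
    (ht : IsTheta X t) :
    ∀ γ < p,
      (X.filter (fun x : ℕ => t < (x : ℤ) ∧ x % p = γ)).card =
      ((Finset.range (t + 1).toNat).filter (fun y => y ∉ X ∧ y % p = γ)).card := by
  intro γ _
  have hcard := ht.toNat_add_one_eq_card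
  have hclass : (X.filter (· % p = γ)).card = ((range X.card).filter (· % p = γ)).card :=
    (card_filter_mod_eq_of_reflTransGen_removePHook hcore).symm
  rw [hcard]
  convert card_sdiff_comm hclass using 2 <;> ext x <;> grind

/-- for a symmetric partition with empty `p`-core, on each runner `γ`
the number of beads right of `θ` equals the number of spaces left of `θ`. -/
theorem stmt5 (p : ℕ) (hp : p.Prime) (X : Finset ℕ) (μ : NPartition) (t : ℤ)
    (hX : IsBetaSet X μ) (hsym : IsSymmetric μ) (hcore : HasEmptyPCore p X)
    (ht : IsTheta X t) :
    ∀ γ < p,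
      (X.filter (fun x : ℕ => t < (x : ℤ) ∧ x % p = γ)).card =
      ((Finset.range (t + 1).toNat).filter (fun y => y ∉ X ∧ y % p = γ)).card :=
  stmt5_general p X t hcore ht
end

section
/- Let p be an odd prime, let λ be a symmetric partition with empty p-core, let X be a β-set for λ with |X| ≡ 0 (mod p), and let θ = θ(X). Suppose y = γ + (k−1)p ∉ X and x = γ + kp ∈ X for some 0 ≤ γ ≤ p − 1 and k ≥ 1, so (y,x) is a p-hook of X and (k−1, k) is a hook of the induced β-set X_γ, corresponding to a node (i,j) of the Young diagram of λ_γ (with i = #{z ∈ X_γ : z ≥ k} and j = #{z ∈ ℕ : z ∉ X_γ, z ≤ k−1}). Then y > θ (i.e. the p-hook lies entirely to the right of θ) if and only if j > i (the node lies on an arm of λ_γ), and x < θ (i.e. the p-hook lies entirely to the left of θ) if and only if j < i (the node lies on a leg of λ_γ). -/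
/-!
For every β-set `X` one has `θ(X) = |X| − 1/2`: below `|X|` there are exactly as many spaces as
there are beads at or above `|X|`. Removing a `p`-hook moves a bead along its runner, so when `X`
reduces to `{0, …, |X| − 1}` and `p ∣ |X|`, every runner of `X` carries `s = |X| / p` beads. On
runner `γ` the node `(i, j)` of the hook `(k, k + 1)` then satisfies `i + (k + 1) = j + s`, and
comparing the `p`-hook with `θ = sp − 1/2` amounts to comparing `k` with `s`, i.e. `j` with `i`.
-/

lemma IsTheta.add_one_eq_card {X : Finset ℕ} {t : ℤ} (ht : IsTheta X t) :
    t + 1 = (X.card : ℤ) := by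
  obtain ⟨ht_ge, hbalance⟩ := ht
  have hm : ((t + 1).toNat : ℤ) = t + 1 := Int.toNat_of_nonneg (by omega)
  set m := (t + 1).toNat
  have hbeads_above : X.filter (fun x : ℕ => t < (x : ℤ)) = X.filter (fun x => ¬ x < m) :=
    Finset.filter_congr fun x _ => by omega
  have hbeads_below : (Finset.range m).filter (· ∈ X) = X.filter (· < m) := by
    ext z
    simp only [Finset.mem_filter, Finset.mem_range]
    tauto
  have hX := Finset.card_filter_add_card_filter_not (s := X) (p := (· < m))
  have hrange := Finset.card_filter_add_card_filter_not (s := Finset.range m) (p := (· ∈ X))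
  rw [Finset.card_range, hbeads_below] at hrange
  rw [hbeads_above] at hbalance
  omega

lemma card_filter_le_add_eq_card_filter_notMem_add_card (R : Finset ℕ) (m : ℕ) :
    (R.filter (m ≤ ·)).card + m = ((Finset.range m).filter (· ∉ R)).card + R.card := by
  have hR := Finset.card_filter_add_card_filter_not (s := R) (p := (m ≤ ·))
  have hrange := Finset.card_filter_add_card_filter_not (s := Finset.range m) (p := (· ∉ R))
  have hbeads_below :
      (Finset.range m).filter (fun z => ¬ z ∉ R) = R.filter (fun z => ¬ m ≤ z) := by
    ext z
    simp only [Finset.mem_filter, Finset.mem_range, not_not, not_le]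
    tauto
  rw [Finset.card_range, hbeads_below] at hrange
  omega

lemma mul_le_add_mul_iff_le {p γ s k : ℕ} (hγ : γ < p) : s * p ≤ γ + k * p ↔ s ≤ k := by
  constructor
  · intro h
    have : s * p < (k + 1) * p := by rw [add_one_mul]; omega
    exact Nat.lt_succ_iff.mp ((Nat.mul_lt_mul_right (by omega)).mp this)
  · intro h
    have := Nat.mul_le_mul_right p h
    omega

section Runner

variable {p γ : ℕ}

lemma mem_runner (hγ : γ < p) (X : Finset ℕ) (j : ℕ) :
    j ∈ runner p γ X ↔ γ + j * p ∈ X := by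
  simp only [runner, Finset.mem_image, Finset.mem_filter]
  constructor
  · rintro ⟨x, ⟨hx, rfl⟩, rfl⟩
    rwa [Nat.mod_add_div' x p]
  · intro h
    refine ⟨γ + j * p, ⟨h, ?_⟩, ?_⟩
    · rw [Nat.add_mul_mod_self_right, Nat.mod_eq_of_lt hγ]
    · rw [Nat.add_mul_div_right _ _ (by omega), Nat.div_eq_of_lt hγ, Nat.zero_add]

lemma card_runner (X : Finset ℕ) :
    (runner p γ X).card = (X.filter (· % p = γ)).card := by
  refine Finset.card_image_of_injOn fun a ha b hb hab => ?_
  simp only [Finset.coe_filter, Set.mem_ofPred_eq] at ha hb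
  rw [← Nat.div_add_mod a p, ← Nat.div_add_mod b p, ha.2, hb.2]
  exact congrArg (p * · + γ) hab

lemma runner_range_mul (hγ : γ < p) (s : ℕ) :
    runner p γ (Finset.range (s * p)) = Finset.range s := by
  ext j
  rw [mem_runner hγ, Finset.mem_range, Finset.mem_range, lt_iff_not_ge, lt_iff_not_ge,
    mul_le_add_mul_iff_le hγ]

lemma RemovePHook.card_runner {X X' : Finset ℕ} (h : RemovePHook p X X') :
    (runner p γ X').card = (runner p γ X).card := by
  obtain ⟨y, _, hy, hx, rfl, rfl⟩ := h
  rw [_root_.card_runner, _root_.card_runner, Finset.filter_insert, Finset.filter_erase]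
  by_cases hmod : y % p = γ
  · have hxf : y + p ∈ X.filter (· % p = γ) :=
      Finset.mem_filter.mpr ⟨hx, by rwa [Nat.add_mod_right]⟩
    have hyf : y ∉ (X.filter (· % p = γ)).erase (y + p) :=
      fun hmem => hy (Finset.mem_filter.mp (Finset.mem_of_mem_erase hmem)).1
    rw [if_pos hmod, Finset.card_insert_of_notMem hyf, Finset.card_erase_of_mem hxf]
    have := Finset.card_pos.mpr ⟨y + p, hxf⟩
    omega
  · have hxf : y + p ∉ X.filter (· % p = γ) :=
      fun hmem => hmod (by simpa [Nat.add_mod_right] using (Finset.mem_filter.mp hmem).2)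
    rw [if_neg hmod, Finset.erase_eq_of_notMem hxf]

lemma card_runner_eq_of_reflTransGen {X X' : Finset ℕ}
    (h : Relation.ReflTransGen (RemovePHook p) X X') :
    (runner p γ X').card = (runner p γ X).card := by
  induction h with
  | refl => rfl
  | tail _ hstep ih => rw [hstep.card_runner, ih]

lemma HasEmptyPCore.card_runner {X : Finset ℕ} (hcore : HasEmptyPCore p X) (hγ : γ < p)
    (hdvd : p ∣ X.card) : (runner p γ X).card = X.card / p := by
  obtain ⟨s, hs⟩ := hdvd
  rw [← card_runner_eq_of_reflTransGen hcore, hs, mul_comm, runner_range_mul hγ,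
    Finset.card_range, Nat.mul_div_cancel _ (by omega)]

end Runner

theorem stmt9_general (p : ℕ)
    (X : Finset ℕ) (t : ℤ)
    (hcore : HasEmptyPCore p X)
    (hcard : X.card % p = 0) (ht : IsTheta X t)
    (γ k : ℕ) (hγ : γ < p)
    (i j : ℕ)
    (hi : i = ((runner p γ X).filter (fun z => k + 1 ≤ z)).card)
    (hj : j = ((Finset.range (k + 1)).filter (fun z => z ∉ runner p γ X)).card) :
    (t < ((γ + k * p : ℕ) : ℤ) ↔ i < j) ∧
    (((γ + (k + 1) * p : ℕ) : ℤ) ≤ t ↔ j < i) := by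
  set s := X.card / p
  have hX : X.card = s * p := (Nat.div_mul_cancel (Nat.dvd_of_mod_eq_zero hcard)).symm
  have ht_eq : t + 1 = (s * p : ℕ) := hX ▸ ht.add_one_eq_card
  have hnode : i + (k + 1) = j + s := by
    rw [hi, hj, card_filter_le_add_eq_card_filter_notMem_add_card,
      hcore.card_runner hγ (Nat.dvd_of_mod_eq_zero hcard)]
  constructor
  · calc t < ((γ + k * p : ℕ) : ℤ) ↔ s * p ≤ γ + k * p := by omega
      _ ↔ s ≤ k := mul_le_add_mul_iff_le hγ
      _ ↔ i < j := by omega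
  · calc ((γ + (k + 1) * p : ℕ) : ℤ) ≤ t ↔ ¬ s * p ≤ γ + (k + 1) * p := by omega
      _ ↔ ¬ s ≤ k + 1 := (mul_le_add_mul_iff_le hγ).not
      _ ↔ j < i := by omega

/-- (here the `p`-hook is `(y, x) = (γ + k·p, γ + (k+1)·p)`,
corresponding to the hook `(k, k+1)` of `X_γ` and the node `(i, j)` of `λ_γ`).
The `p`-hook lies entirely right of `θ` iff the node lies on an arm (`j > i`),
and entirely left of `θ` iff the node lies on a leg (`j < i`). -/
theorem stmt9 (p : ℕ) (hp : p.Prime) (hodd : Odd p)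
    (X : Finset ℕ) (μ : NPartition) (t : ℤ)
    (hX : IsBetaSet X μ) (hsym : IsSymmetric μ) (hcore : HasEmptyPCore p X)
    (hcard : X.card % p = 0) (ht : IsTheta X t)
    (γ k : ℕ) (hγ : γ < p)
    (hy : γ + k * p ∉ X) (hx : γ + (k + 1) * p ∈ X)
    (i j : ℕ)
    (hi : i = ((runner p γ X).filter (fun z => k + 1 ≤ z)).card)
    (hj : j = ((Finset.range (k + 1)).filter (fun z => z ∉ runner p γ X)).card) :
    (t < ((γ + k * p : ℕ) : ℤ) ↔ i < j) ∧
    (((γ + (k + 1) * p : ℕ) : ℤ) ≤ t ↔ j < i) :=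
  stmt9_general p X t hcore hcard ht γ k hγ i j hi hj
end

section
/- Let p be an odd prime, write γ* = p − 1 − γ, and let λ^0 be a symmetric partition that is a p-core. Let γ with 0 ≤ γ ≤ p − 1 and γ ≠ γ*. If λ^0 has a diagonal hook whose arm length is congruent to γ modulo p, then λ^0 has no diagonal hook whose arm length is congruent to γ* modulo p. -/
/-!
Record `μ` by its beads `μᵢ - i - 1 ∈ ℤ` on the infinite abacus; the remaining positions are
the spaces `j - μ*ⱼ`. A hook of length `p` joins a bead at `n` to a space at `n - p`, so for a
`p`-core the beads are closed under `n ↦ n - p`, while for `μ = μ*` the position `-1 - n` is a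
space whenever `n` is a bead. The arm of a diagonal hook is a bead, so arms `≡ γ` and `≡ γ*`
give beads at `γ - p` and at `p - 1 - γ = -1 - (γ - p)`, which is impossible.
-/

namespace NPartition

variable (μ : NPartition)

theorem lt_conj_iff {i j : ℕ} : i < μ.conj j ↔ j < μ.parts i := by
  have hex : ∃ m, μ.parts m ≤ j := by
    obtain ⟨N, hN⟩ := μ.finite_support
    exact ⟨N, (hN N le_rfl).symm ▸ Nat.zero_le j⟩
  have hrow : ∀ k, j < μ.parts k ↔ k < Nat.find hex := fun k =>
    ⟨fun hk => lt_of_not_ge fun hm => hk.not_ge ((μ.antitone hm).trans (Nat.find_spec hex)),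
     fun hk => lt_of_not_ge (Nat.find_min hex hk)⟩
  have hconj : μ.conj j = Nat.find hex := by
    rw [conj, Nat.card_congr ((Equiv.subtypeEquivRight hrow).trans Fin.equivSubtype.symm),
      Nat.card_fin]
  rw [hconj, hrow]

/-- The beads of the infinite abacus of `μ`, normalized so that the empty partition has its
beads exactly at the negative integers. -/
def betaNumbers : Set ℤ := {n | ∃ i : ℕ, n = (μ.parts i : ℤ) - i - 1}

def spaces : Set ℤ := {n | ∃ j : ℕ, n = (j : ℤ) - μ.conj j}

theorem disjoint_betaNumbers_spaces : Disjoint μ.betaNumbers μ.spaces := by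
  rw [Set.disjoint_left]
  rintro _ ⟨i, rfl⟩ ⟨j, hj⟩
  rcases lt_or_ge j (μ.parts i) with hji | hij
  · have := (μ.lt_conj_iff).mpr hji
    omega
  · have := mt (μ.lt_conj_iff).mp hij.not_gt
    omega

theorem mem_spaces_of_notMem_betaNumbers {n : ℤ} (hn : n ∉ μ.betaNumbers) : n ∈ μ.spaces := by
  have hex : ∃ i : ℕ, (μ.parts i : ℤ) ≤ i + n + 1 := by
    obtain ⟨N, hN⟩ := μ.finite_support
    refine ⟨N + n.natAbs, ?_⟩
    rw [hN _ (Nat.le_add_right _ _)]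
    omega
  -- `i` is the first row whose cell in column `i + n + 1` lies outside `μ`; unless `n` is the
  -- bead of row `i`, column `i + n` then has length exactly `i`.
  obtain ⟨i, hi, hmin⟩ : ∃ i : ℕ, (μ.parts i : ℤ) ≤ i + n + 1 ∧
      ∀ k < i, ¬ (μ.parts k : ℤ) ≤ k + n + 1 :=
    ⟨Nat.find hex, Nat.find_spec hex, fun _ => Nat.find_min hex⟩
  have hi : (μ.parts i : ℤ) < i + n + 1 := hi.lt_of_ne fun h => hn ⟨i, by omega⟩
  obtain ⟨j, hj⟩ : ∃ j : ℕ, (j : ℤ) = i + n := ⟨(i + n).toNat, by omega⟩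
  have hconj_le : μ.conj j ≤ i := by
    have := mt (μ.lt_conj_iff (i := i) (j := j)).mp (by omega)
    omega
  have hconj_ge : i ≤ μ.conj j := by
    rcases Nat.eq_zero_or_pos i with h0 | hpos
    · omega
    · have hprev := hmin (i - 1) (by omega)
      have := (μ.lt_conj_iff (i := i - 1) (j := j)).mpr (by omega)
      omega
  exact ⟨j, by omega⟩

end NPartition

section Abacus

variable {p : ℕ} {μ : NPartition}

theorem IsPCore.sub_mem_betaNumbers (hcore : IsPCore p μ) {n : ℤ}
    (hn : n ∈ μ.betaNumbers) : n - p ∈ μ.betaNumbers := by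
  obtain ⟨i, rfl⟩ := hn
  by_contra hnot
  obtain ⟨j, hj⟩ := μ.mem_spaces_of_notMem_betaNumbers hnot
  have hj_lt : j < μ.parts i := by
    by_contra hle
    have := mt (μ.lt_conj_iff).mp hle
    omega
  exact hcore i j hj_lt (by omega)

theorem IsPCore.sub_mul_mem_betaNumbers (hcore : IsPCore p μ) {n : ℤ}
    (hn : n ∈ μ.betaNumbers) (k : ℕ) : n - k * p ∈ μ.betaNumbers := by
  induction k with
  | zero => simpa using hn
  | succ k ih =>
    convert hcore.sub_mem_betaNumbers ih using 1
    push_cast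
    ring

theorem IsPCore.natCast_mod_mem_betaNumbers (hcore : IsPCore p μ) {a : ℕ}
    (ha : (a : ℤ) ∈ μ.betaNumbers) : ((a % p : ℕ) : ℤ) ∈ μ.betaNumbers := by
  convert hcore.sub_mul_mem_betaNumbers ha (a / p) using 1
  have hdiv : ((a % p : ℕ) : ℤ) + p * (a / p : ℕ) = a := by exact_mod_cast Nat.mod_add_div a p
  linear_combination hdiv

theorem IsSymmetric.neg_sub_one_notMem_betaNumbers (hsym : IsSymmetric μ)
    {n : ℤ} (hn : n ∈ μ.betaNumbers) : -1 - n ∉ μ.betaNumbers := by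
  obtain ⟨i, rfl⟩ := hn
  refine Set.disjoint_right.mp μ.disjoint_betaNumbers_spaces ⟨i, ?_⟩
  rw [hsym i]
  ring

theorem natCast_mem_betaNumbers_of_mem_diagArms {a : ℕ} (ha : a ∈ diagArms μ) :
    (a : ℤ) ∈ μ.betaNumbers := by
  obtain ⟨d, -, hd⟩ := ha
  exact ⟨d, by omega⟩

end Abacus

theorem stmt16_general (p : ℕ) (γ : ℕ) (hγ : γ < p)
    (μ : NPartition) (hsym : IsSymmetric μ) (hcore : IsPCore p μ)
    (h : ∃ a ∈ diagArms μ, a % p = γ) :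
    ∀ a ∈ diagArms μ, a % p ≠ p - 1 - γ := by
  intro b hb hbmod
  obtain ⟨a, ha, hamod⟩ := h
  have hγ_bead := hcore.natCast_mod_mem_betaNumbers (natCast_mem_betaNumbers_of_mem_diagArms ha)
  have hγstar_bead :=
    hcore.natCast_mod_mem_betaNumbers (natCast_mem_betaNumbers_of_mem_diagArms hb)
  rw [hamod] at hγ_bead
  rw [hbmod] at hγstar_bead
  refine hsym.neg_sub_one_notMem_betaNumbers hγstar_bead ?_
  convert hcore.sub_mem_betaNumbers hγ_bead using 1
  omega

/-- a symmetric `p`-core with a diagonal hook of arm length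
`≡ γ (mod p)` (`γ ≠ γ*`) has no diagonal hook of arm length `≡ γ* (mod p)`. -/
theorem stmt16 (p : ℕ) (hp : p.Prime) (hodd : Odd p) (γ : ℕ) (hγ : γ < p)
    (hne : γ ≠ p - 1 - γ)
    (μ : NPartition) (hsym : IsSymmetric μ) (hcore : IsPCore p μ)
    (h : ∃ a ∈ diagArms μ, a % p = γ) :
    ∀ a ∈ diagArms μ, a % p ≠ p - 1 - γ :=
  stmt16_general p γ hγ μ hsym hcore h
end
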